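/- Assume in addition that |J_t x| = |t|·|x| for all x ∈ ℝ^{2n} and t ∈ ℝ^m (the H-type condition). Then for every α > 0 and every (x,t) ∈ G*: V_α(x,t) = (1/4) α² N(x,t)^{2α−4} |x|² − (1/2) α (Q + α − 2) N(x,t)^{α−4} |x|², where Q := 2n + 2m is the homogeneous dimension of G. -/

import Mathlib

/-!
Write `N⁴ = |x|⁴ + 16|t|²`, a polynomial, and `w_α = φ(N⁴)` with `φ(s) = exp(-s^(α/4))`.
Each `X_j` is a derivation, so `X_j w = φ'(N⁴) X_j N⁴` and
`X_j² w = φ''(N⁴) (X_j N⁴)² + φ'(N⁴) X_j² N⁴`. Here `X_j N⁴ = 4|x|² x_j + 16 (J_t x)_j`;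
skew-symmetry (`⟨x, J_t x⟩ = 0`, `J_k` has zero diagonal) and the H-type identity
`|J_t x| = |t| |x|` give `|∇_H N⁴|² = 16 |x|² N⁴` and `∑_j X_j² N⁴ = 4 (Q + 2) |x|²`.
Substituting these into `V_α` leaves an identity between powers of `N`.
-/

open MeasureTheory Filter
open scoped BigOperators ENNReal NNReal

noncomputable section

/-- Points of the Métivier group `G = ℝ^{2n} × ℝ^m`. -/
abbrev GrpPt (n m : ℕ) := (Fin (2*n) → ℝ) × (Fin m → ℝ)

/-- Euclidean norm on `Fin k → ℝ`. -/
def e2norm {k : ℕ} (x : Fin k → ℝ) : ℝ := Real.sqrt (∑ i, (x i)^2)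

/-- Kaplan norm `N(x,t) = (|x|^4 + 16|t|^2)^(1/4)`. -/
def kN {n m : ℕ} (p : GrpPt n m) : ℝ := (e2norm p.1 ^ 4 + 16 * e2norm p.2 ^ 2) ^ ((1:ℝ)/4)

/-- Group multiplication of the Métivier group. -/
def gmul {n m : ℕ} (J : Fin m → Matrix (Fin (2*n)) (Fin (2*n)) ℝ) (p q : GrpPt n m) : GrpPt n m :=
  (p.1 + q.1, p.2 + q.2 + fun k => (1/2 : ℝ) * ∑ i, (J k).mulVec p.1 i * q.1 i)

/-- Horizontal left-invariant vector field `X_j`. -/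
def XD {n m : ℕ} (J : Fin m → Matrix (Fin (2*n)) (Fin (2*n)) ℝ)
    {E : Type*} [NormedAddCommGroup E] [NormedSpace ℝ E]
    (j : Fin (2*n)) (f : GrpPt n m → E) (p : GrpPt n m) : E :=
  fderiv ℝ f p (Pi.single j 1, 0)
    + (1/2 : ℝ) • ∑ k, ((J k).mulVec p.1 j) • fderiv ℝ f p (0, Pi.single k 1)

/-- Squared length of the horizontal gradient. -/
def gradSq {n m : ℕ} (J : Fin m → Matrix (Fin (2*n)) (Fin (2*n)) ℝ)
    (f : GrpPt n m → ℝ) (p : GrpPt n m) : ℝ := ∑ j, (XD J j f p)^2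

/-- Sub-Laplacian `L f = -∑ X_j (X_j f)`. -/
def LSub {n m : ℕ} (J : Fin m → Matrix (Fin (2*n)) (Fin (2*n)) ℝ)
    {E : Type*} [NormedAddCommGroup E] [NormedSpace ℝ E]
    (f : GrpPt n m → E) (p : GrpPt n m) : E := - ∑ j, XD J j (XD J j f) p

/-- Weight `w_α = exp (-N^α)`. -/
def wA {n m : ℕ} (α : ℝ) (p : GrpPt n m) : ℝ := Real.exp (-(kN p ^ α))

/-- Potential `V_α = -(1/4) |grad w_α|²/w_α² - (1/2) (L w_α)/w_α`. -/
def VA {n m : ℕ} (J : Fin m → Matrix (Fin (2*n)) (Fin (2*n)) ℝ) (α : ℝ) (p : GrpPt n m) : ℝ :=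
  -(1/4) * gradSq J (wA α) p / (wA α p)^2 - (1/2) * LSub J (wA α) p / wA α p

open Topology

variable {n m : ℕ}

def IsHType (J : Fin m → Matrix (Fin (2*n)) (Fin (2*n)) ℝ) : Prop :=
  ∀ (x : Fin (2*n) → ℝ) (t : Fin m → ℝ),
    e2norm ((∑ k, t k • J k).mulVec x) = e2norm t * e2norm x

def kNPow4 (p : GrpPt n m) : ℝ := (∑ i, p.1 i ^ 2) ^ 2 + 16 * ∑ k, p.2 k ^ 2

section HorizontalDerivation

variable (J : Fin m → Matrix (Fin (2*n)) (Fin (2*n)) ℝ)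

def horizVec (j : Fin (2*n)) (p : GrpPt n m) : GrpPt n m :=
  (Pi.single j 1, fun k => (1/2 : ℝ) * (J k).mulVec p.1 j)

lemma XD_eq_fderiv {E : Type*} [NormedAddCommGroup E] [NormedSpace ℝ E]
    (j : Fin (2*n)) (f : GrpPt n m → E) (p : GrpPt n m) :
    XD J j f p = fderiv ℝ f p (horizVec J j p) := by
  have h : horizVec J j p = (Pi.single j 1, 0)
      + (1/2 : ℝ) • ∑ k, (J k).mulVec p.1 j
          • ((0 : Fin (2*n) → ℝ), (Pi.single k 1 : Fin m → ℝ)) := by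
    ext k
    · simp [horizVec, Prod.fst_sum]
    · simp [horizVec, Prod.snd_sum, Finset.sum_apply, Pi.single_apply]
  rw [h, map_add, map_smul, map_sum]
  simp only [map_smul, XD]

variable (j : Fin (2*n)) {f g : GrpPt n m → ℝ} {p : GrpPt n m}

lemma XD_congr (h : f =ᶠ[𝓝 p] g) : XD J j f p = XD J j g p := by
  rw [XD_eq_fderiv, XD_eq_fderiv, h.fderiv_eq]

lemma XD_add (hf : DifferentiableAt ℝ f p) (hg : DifferentiableAt ℝ g p) :
    XD J j (fun q => f q + g q) p = XD J j f p + XD J j g p := by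
  simp only [XD_eq_fderiv, fderiv_fun_add hf hg, add_apply]

lemma XD_mul (hf : DifferentiableAt ℝ f p) (hg : DifferentiableAt ℝ g p) :
    XD J j (fun q => f q * g q) p = XD J j f p * g p + f p * XD J j g p := by
  simp only [XD_eq_fderiv, fderiv_fun_mul hf hg, add_apply, smul_apply, smul_eq_mul]
  ring

lemma XD_const_mul (hf : DifferentiableAt ℝ f p) (c : ℝ) :
    XD J j (fun q => c * f q) p = c * XD J j f p := by
  simp only [XD_eq_fderiv, fderiv_const_mul hf, smul_apply, smul_eq_mul]

lemma XD_sum {ι : Type*} (s : Finset ι) {F : ι → GrpPt n m → ℝ}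
    (hF : ∀ i ∈ s, DifferentiableAt ℝ (F i) p) :
    XD J j (fun q => ∑ i ∈ s, F i q) p = ∑ i ∈ s, XD J j (F i) p := by
  simp only [XD_eq_fderiv, fderiv_fun_sum hF, sum_apply]

lemma XD_comp {φ : ℝ → ℝ} {d : ℝ} (hφ : HasDerivAt φ d (f p))
    (hf : DifferentiableAt ℝ f p) :
    XD J j (fun q => φ (f q)) p = d * XD J j f p := by
  have h := hφ.comp_hasFDerivAt p hf.hasFDerivAt
  rw [Function.comp_def] at h
  rw [XD_eq_fderiv, XD_eq_fderiv, h.fderiv, smul_apply, smul_eq_mul]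

lemma XD_pow (hf : DifferentiableAt ℝ f p) (k : ℕ) :
    XD J j (fun q => f q ^ k) p = k * f p ^ (k - 1) * XD J j f p :=
  XD_comp J j (hasDerivAt_pow k (f p)) hf

lemma XD_fst (i : Fin (2*n)) :
    XD J j (fun q : GrpPt n m => q.1 i) p = (Pi.single j 1 : Fin (2*n) → ℝ) i := by
  have h : HasFDerivAt (fun q : GrpPt n m => q.1 i)
      ((ContinuousLinearMap.proj i).comp (ContinuousLinearMap.fst ℝ _ _)) p :=
    ((ContinuousLinearMap.proj i).comp
      (ContinuousLinearMap.fst ℝ (Fin (2*n) → ℝ) (Fin m → ℝ))).hasFDerivAt (x := p)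
  rw [XD_eq_fderiv, h.fderiv]
  rfl

lemma XD_snd (k : Fin m) :
    XD J j (fun q : GrpPt n m => q.2 k) p = (1/2) * (J k).mulVec p.1 j := by
  have h : HasFDerivAt (fun q : GrpPt n m => q.2 k)
      ((ContinuousLinearMap.proj k).comp (ContinuousLinearMap.snd ℝ _ _)) p :=
    ((ContinuousLinearMap.proj k).comp
      (ContinuousLinearMap.snd ℝ (Fin (2*n) → ℝ) (Fin m → ℝ))).hasFDerivAt (x := p)
  rw [XD_eq_fderiv, h.fderiv]
  rfl

lemma XD_mulVec_fst (A : Matrix (Fin (2*n)) (Fin (2*n)) ℝ) (i : Fin (2*n)) :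
    XD J j (fun q : GrpPt n m => A.mulVec q.1 i) p = A i j := by
  have h : ∀ i', DifferentiableAt ℝ (fun q : GrpPt n m => q.1 i') p := fun i' => by fun_prop
  simp only [Matrix.mulVec, dotProduct]
  rw [XD_sum J j _ fun i' _ => (h i').const_mul (A i i')]
  simp [XD_const_mul J j (h _), XD_fst, Pi.single_apply]

end HorizontalDerivation

@[fun_prop]
lemma Differentiable.mulVec_apply {E ι : Type*} [Fintype ι] [NormedAddCommGroup E]
    [NormedSpace ℝ E] {f : E → ι → ℝ} (hf : Differentiable ℝ f) (A : Matrix ι ι ℝ)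
    (i : ι) :
    Differentiable ℝ (fun x => A.mulVec (f x) i) := by
  simp only [Matrix.mulVec, dotProduct]
  fun_prop

lemma Matrix.sum_smul_mulVec_apply {ι κ : Type*} [Fintype ι] [Fintype κ]
    (A : κ → Matrix ι ι ℝ) (t : κ → ℝ) (x : ι → ℝ) (i : ι) :
    (∑ k, t k • A k).mulVec x i = ∑ k, t k * (A k).mulVec x i := by
  simp only [Matrix.sum_mulVec, Matrix.smul_mulVec, Finset.sum_apply, Pi.smul_apply, smul_eq_mul]

lemma Matrix.dotProduct_mulVec_self_of_transpose_eq_neg {ι : Type*} [Fintype ι]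
    {A : Matrix ι ι ℝ} (hA : A.transpose = -A) (x : ι → ℝ) : x ⬝ᵥ A.mulVec x = 0 := by
  have h : x ⬝ᵥ A.mulVec x = -(x ⬝ᵥ A.mulVec x) := by
    conv_lhs => rw [Matrix.dotProduct_mulVec, ← Matrix.mulVec_transpose, hA, Matrix.neg_mulVec,
      dotProduct_comm, dotProduct_neg]
  linarith

lemma Matrix.diag_eq_zero_of_transpose_eq_neg {ι : Type*} {A : Matrix ι ι ℝ}
    (hA : A.transpose = -A) (i : ι) : A i i = 0 := by
  have h := congrFun (congrFun hA i) i
  simp only [Matrix.transpose_apply, Matrix.neg_apply] at h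
  linarith

lemma e2norm_sq {k : ℕ} (x : Fin k → ℝ) : e2norm x ^ 2 = ∑ i, x i ^ 2 :=
  Real.sq_sqrt (Finset.sum_nonneg fun i _ => sq_nonneg (x i))

section HType

variable {J : Fin m → Matrix (Fin (2*n)) (Fin (2*n)) ℝ}

lemma IsHType.sum_sq_mulVec (hJ : IsHType J) (x : Fin (2*n) → ℝ) (t : Fin m → ℝ) :
    ∑ j, (∑ k, t k • J k).mulVec x j ^ 2 = (∑ k, t k ^ 2) * ∑ i, x i ^ 2 := by
  rw [← e2norm_sq, ← e2norm_sq, ← e2norm_sq, hJ, mul_pow]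

lemma IsHType.sum_sq_mulVec_single (hJ : IsHType J) (x : Fin (2*n) → ℝ) (k : Fin m) :
    ∑ j, (J k).mulVec x j ^ 2 = ∑ i, x i ^ 2 := by
  have h := hJ.sum_sq_mulVec x (Pi.single k 1 : Fin m → ℝ)
  have hJk : ∑ k', (Pi.single k 1 : Fin m → ℝ) k' • J k' = J k := by
    rw [Finset.sum_eq_single k (fun k' _ hk' => by simp [hk']) (by simp)]
    simp
  have hone : ∑ k', (Pi.single k 1 : Fin m → ℝ) k' ^ 2 = 1 := by
    rw [Finset.sum_eq_single k (fun k' _ hk' => by simp [hk']) (by simp)]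
    simp
  rwa [hJk, hone, one_mul] at h

end HType

section KaplanGauge

variable (J : Fin m → Matrix (Fin (2*n)) (Fin (2*n)) ℝ)

def horizGradKNPow4 (j : Fin (2*n)) (p : GrpPt n m) : ℝ :=
  4 * (∑ i, p.1 i ^ 2) * p.1 j + 16 * ∑ k, p.2 k * (J k).mulVec p.1 j

lemma differentiable_kNPow4 : Differentiable ℝ (kNPow4 : GrpPt n m → ℝ) := by
  unfold kNPow4
  fun_prop

lemma differentiable_horizGradKNPow4 (j : Fin (2*n)) :
    Differentiable ℝ (horizGradKNPow4 J j : GrpPt n m → ℝ) := by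
  unfold horizGradKNPow4
  fun_prop

variable (j : Fin (2*n)) (p : GrpPt n m)

lemma XD_sum_sq_fst : XD J j (fun q : GrpPt n m => ∑ i, q.1 i ^ 2) p = 2 * p.1 j := by
  have h (i : Fin (2*n)) : XD J j (fun q : GrpPt n m => q.1 i ^ 2) p
      = 2 * p.1 i * (Pi.single j 1 : Fin (2*n) → ℝ) i := by
    rw [XD_pow J j (by fun_prop), XD_fst]
    norm_num
  rw [XD_sum J j _ fun i _ => by fun_prop]
  simp [h, Pi.single_apply]

lemma XD_sum_sq_snd :
    XD J j (fun q : GrpPt n m => ∑ k, q.2 k ^ 2) p = ∑ k, p.2 k * (J k).mulVec p.1 j := by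
  have h (k : Fin m) : XD J j (fun q : GrpPt n m => q.2 k ^ 2) p
      = p.2 k * (J k).mulVec p.1 j := by
    rw [XD_pow J j (by fun_prop), XD_snd]
    ring
  rw [XD_sum J j _ fun i _ => by fun_prop]
  simp [h]

lemma XD_kNPow4 : XD J j kNPow4 p = horizGradKNPow4 J j p := by
  unfold kNPow4
  rw [XD_add J j (by fun_prop) (by fun_prop), XD_pow J j (by fun_prop), XD_sum_sq_fst,
    XD_const_mul J j (by fun_prop), XD_sum_sq_snd, horizGradKNPow4]
  ring

lemma XD_horizGradKNPow4 :
    XD J j (horizGradKNPow4 J j) p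
      = 8 * p.1 j ^ 2 + 4 * ∑ i, p.1 i ^ 2 + 8 * ∑ k, (J k).mulVec p.1 j ^ 2
        + 16 * ∑ k, p.2 k * J k j j := by
  have h (k : Fin m) : XD J j (fun q : GrpPt n m => q.2 k * (J k).mulVec q.1 j) p
      = (1/2) * (J k).mulVec p.1 j ^ 2 + p.2 k * J k j j := by
    rw [XD_mul J j (by fun_prop) (by fun_prop), XD_snd, XD_mulVec_fst]
    ring
  unfold horizGradKNPow4
  rw [XD_add J j (by fun_prop) (by fun_prop), XD_mul J j (by fun_prop) (by fun_prop),
    XD_const_mul J j (by fun_prop), XD_sum_sq_fst, XD_fst, XD_const_mul J j (by fun_prop),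
    XD_sum J j _ fun k _ => by fun_prop]
  simp only [h, Finset.sum_add_distrib, ← Finset.mul_sum, Pi.single_eq_same]
  ring

variable {J}

lemma sum_horizGradKNPow4_sq (hskew : ∀ k, (J k).transpose = -(J k)) (hJ : IsHType J) :
    ∑ j, horizGradKNPow4 J j p ^ 2 = 16 * (∑ i, p.1 i ^ 2) * kNPow4 p := by
  set Jt := ∑ k, p.2 k • J k
  have hJt : Jt.transpose = -Jt := by
    simp only [Jt, Matrix.transpose_sum, Matrix.transpose_smul, hskew, smul_neg,
      Finset.sum_neg_distrib]
  have horth : ∑ j, p.1 j * Jt.mulVec p.1 j = 0 :=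
    Matrix.dotProduct_mulVec_self_of_transpose_eq_neg hJt p.1
  have hnorm : ∑ j, Jt.mulVec p.1 j ^ 2 = (∑ k, p.2 k ^ 2) * ∑ i, p.1 i ^ 2 :=
    hJ.sum_sq_mulVec p.1 p.2
  have hexpand (j : Fin (2*n)) : horizGradKNPow4 J j p ^ 2
      = 16 * (∑ i, p.1 i ^ 2) ^ 2 * p.1 j ^ 2
        + 128 * (∑ i, p.1 i ^ 2) * (p.1 j * Jt.mulVec p.1 j) + 256 * Jt.mulVec p.1 j ^ 2 := by
    rw [horizGradKNPow4, ← Matrix.sum_smul_mulVec_apply]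
    ring
  simp only [hexpand, Finset.sum_add_distrib, ← Finset.mul_sum, horth, hnorm, kNPow4]
  ring

lemma sum_XD_horizGradKNPow4 (hskew : ∀ k, (J k).transpose = -(J k)) (hJ : IsHType J) :
    ∑ j, XD J j (horizGradKNPow4 J j) p = 8 * (n + m + 1) * ∑ i, p.1 i ^ 2 := by
  have hsq : ∑ j, ∑ k, (J k).mulVec p.1 j ^ 2 = m * ∑ i, p.1 i ^ 2 := by
    rw [Finset.sum_comm]
    simp [hJ.sum_sq_mulVec_single]
  have hdiag : ∑ j, ∑ k, p.2 k * J k j j = 0 := by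
    simp [Matrix.diag_eq_zero_of_transpose_eq_neg (hskew _)]
  simp only [XD_horizGradKNPow4, Finset.sum_add_distrib, ← Finset.mul_sum, hsq, hdiag,
    Finset.sum_const, Finset.card_univ, Fintype.card_fin, nsmul_eq_mul]
  push_cast
  ring

end KaplanGauge

section Radial

variable (J : Fin m → Matrix (Fin (2*n)) (Fin (2*n)) ℝ) (j : Fin (2*n)) {p : GrpPt n m}
  {φ φ' : ℝ → ℝ} {d d' : ℝ}

lemma XD_comp_kNPow4 (hφ : HasDerivAt φ d (kNPow4 p)) :
    XD J j (fun q => φ (kNPow4 q)) p = d * horizGradKNPow4 J j p := by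
  rw [XD_comp J j hφ (differentiable_kNPow4 p), XD_kNPow4]

lemma XD_XD_comp_kNPow4 (hφ : ∀ᶠ s in 𝓝 (kNPow4 p), HasDerivAt φ (φ' s) s)
    (hφ' : HasDerivAt φ' d' (kNPow4 p)) :
    XD J j (XD J j (fun q => φ (kNPow4 q))) p
      = d' * horizGradKNPow4 J j p ^ 2 + φ' (kNPow4 p) * XD J j (horizGradKNPow4 J j) p := by
  have hXD : XD J j (fun q => φ (kNPow4 q))
      =ᶠ[𝓝 p] fun q => φ' (kNPow4 q) * horizGradKNPow4 J j q := by
    filter_upwards [differentiable_kNPow4.continuous.continuousAt.eventually hφ] with q hq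
    exact XD_comp_kNPow4 J j hq
  have hφ'r : DifferentiableAt ℝ (fun q => φ' (kNPow4 q)) p :=
    hφ'.differentiableAt.comp p (differentiable_kNPow4 p)
  rw [XD_congr J j hXD, XD_mul J j hφ'r (differentiable_horizGradKNPow4 J j p),
    XD_comp_kNPow4 J j hφ']
  ring

variable {J}

lemma gradSq_comp_kNPow4 (hskew : ∀ k, (J k).transpose = -(J k)) (hJ : IsHType J)
    (hφ : HasDerivAt φ d (kNPow4 p)) :
    gradSq J (fun q => φ (kNPow4 q)) p = d ^ 2 * (16 * (∑ i, p.1 i ^ 2) * kNPow4 p) := by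
  simp only [gradSq, XD_comp_kNPow4 J _ hφ, mul_pow, ← Finset.mul_sum,
    sum_horizGradKNPow4_sq p hskew hJ]

lemma LSub_comp_kNPow4 (hskew : ∀ k, (J k).transpose = -(J k)) (hJ : IsHType J)
    (hφ : ∀ᶠ s in 𝓝 (kNPow4 p), HasDerivAt φ (φ' s) s)
    (hφ' : HasDerivAt φ' d' (kNPow4 p)) :
    LSub J (fun q => φ (kNPow4 q)) p
      = -(d' * (16 * (∑ i, p.1 i ^ 2) * kNPow4 p)
          + φ' (kNPow4 p) * (8 * (n + m + 1) * ∑ i, p.1 i ^ 2)) := by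
  simp only [LSub, XD_XD_comp_kNPow4 J _ hφ hφ', Finset.sum_add_distrib, ← Finset.mul_sum,
    sum_horizGradKNPow4_sq p hskew hJ, sum_XD_horizGradKNPow4 p hskew hJ]

end Radial

section ExpNegRpow

variable {γ s : ℝ}

lemma hasDerivAt_exp_neg_rpow (hs : 0 < s) :
    HasDerivAt (fun s => Real.exp (-s ^ γ)) (-(γ * s ^ (γ - 1)) * Real.exp (-s ^ γ)) s := by
  have h := (Real.hasDerivAt_rpow_const (p := γ) (Or.inl hs.ne')).fun_neg.exp
  convert h using 1
  ring

lemma hasDerivAt_rpow_sub_one_mul_exp_neg_rpow (hs : 0 < s) :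
    HasDerivAt (fun s => -(γ * s ^ (γ - 1)) * Real.exp (-s ^ γ))
      ((γ ^ 2 * s ^ (2 * γ - 2) - γ * (γ - 1) * s ^ (γ - 2)) * Real.exp (-s ^ γ)) s := by
  have h := ((Real.hasDerivAt_rpow_const (p := γ - 1) (Or.inl hs.ne')).const_mul γ).fun_neg
    |>.fun_mul (hasDerivAt_exp_neg_rpow (γ := γ) hs)
  refine h.congr_deriv ?_
  rw [show 2 * γ - 2 = (γ - 1) + (γ - 1) by ring, Real.rpow_add hs,
    show γ - 1 - 1 = γ - 2 by ring]
  ring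

end ExpNegRpow

lemma kNPow4_nonneg (p : GrpPt n m) : 0 ≤ kNPow4 p := by
  unfold kNPow4
  positivity

lemma kNPow4_pos {p : GrpPt n m} (hp : p ≠ 0) : 0 < kNPow4 p := by
  refine (kNPow4_nonneg p).lt_of_ne fun h => hp ?_
  have hS : 0 ≤ ∑ i, p.1 i ^ 2 := by positivity
  have hT : 0 ≤ ∑ k, p.2 k ^ 2 := by positivity
  have hS0 : ∑ i, p.1 i ^ 2 = 0 := by unfold kNPow4 at h; nlinarith
  have hT0 : ∑ k, p.2 k ^ 2 = 0 := by unfold kNPow4 at h; nlinarith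
  rw [Fintype.sum_eq_zero_iff_of_nonneg (fun _ => sq_nonneg _)] at hS0 hT0
  ext i
  · simpa using congrFun hS0 i
  · simpa using congrFun hT0 i

lemma kN_eq_kNPow4_rpow (p : GrpPt n m) : kN p = kNPow4 p ^ (1/4 : ℝ) := by
  rw [kN, kNPow4, e2norm_sq, show e2norm p.1 ^ 4 = (e2norm p.1 ^ 2) ^ 2 by ring, e2norm_sq]

lemma wA_eq_comp_kNPow4 (α : ℝ) :
    (wA α : GrpPt n m → ℝ) = fun q => Real.exp (-kNPow4 q ^ (α / 4)) := by
  funext q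
  rw [wA, kN_eq_kNPow4_rpow, ← Real.rpow_mul (kNPow4_nonneg q)]
  ring_nf

theorem potential_Htype_general (n m : ℕ)
    (J : Fin m → Matrix (Fin (2*n)) (Fin (2*n)) ℝ)
    (hskew : ∀ k, (J k).transpose = -(J k))
    (hHtype : ∀ (x : Fin (2*n) → ℝ) (t : Fin m → ℝ),
      e2norm ((∑ k, t k • J k).mulVec x) = e2norm t * e2norm x) :
    ∀ α : ℝ, 0 < α → ∀ p : GrpPt n m, p ≠ 0 →
      VA J α p
        = (1/4) * α^2 * kN p ^ (2*α - 4) * e2norm p.1 ^ 2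
          - (1/2) * α * ((2*(n:ℝ) + 2*(m:ℝ)) + α - 2) * kN p ^ (α - 4) * e2norm p.1 ^ 2 := by
  intro α _ p hp
  set r := kNPow4 p
  have hr : 0 < r := kNPow4_pos hp
  have hφ : ∀ᶠ s in 𝓝 r, HasDerivAt (fun s => Real.exp (-s ^ (α / 4)))
      (-(α / 4 * s ^ (α / 4 - 1)) * Real.exp (-s ^ (α / 4))) s := by
    filter_upwards [isOpen_Ioi.mem_nhds hr] with s hs using hasDerivAt_exp_neg_rpow hs
  rw [VA, wA_eq_comp_kNPow4, gradSq_comp_kNPow4 hskew hHtype hφ.self_of_nhds,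
    LSub_comp_kNPow4 hskew hHtype hφ (hasDerivAt_rpow_sub_one_mul_exp_neg_rpow hr),
    kN_eq_kNPow4_rpow, e2norm_sq, ← Real.rpow_mul hr.le, ← Real.rpow_mul hr.le]
  set a := r ^ (α / 4 - 1)
  have ha2 : r ^ (2 * (α / 4) - 2) = a ^ 2 := by
    rw [show 2 * (α / 4) - 2 = (α / 4 - 1) + (α / 4 - 1) by ring, Real.rpow_add hr, sq]
  have hN1 : r ^ (1 / 4 * (2 * α - 4)) = a ^ 2 * r := by
    rw [show 1 / 4 * (2 * α - 4) = (2 * (α / 4) - 2) + 1 by ring, Real.rpow_add hr, ha2,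
      Real.rpow_one]
  have hN2 : r ^ (1 / 4 * (α - 4)) = a := by
    rw [show 1 / 4 * (α - 4) = α / 4 - 1 by ring]
  have hr2 : r ^ (α / 4 - 2) = a / r := by
    rw [show α / 4 - 2 = (α / 4 - 1) - 1 by ring, Real.rpow_sub_one hr.ne']
  rw [ha2, hN1, hN2, hr2]
  field_simp
  ring

/-- Explicit formula for `V_α` on H-type groups. -/
theorem potential_Htype (n m : ℕ) (hn : 1 ≤ n) (hm : 1 ≤ m)
    (J : Fin m → Matrix (Fin (2*n)) (Fin (2*n)) ℝ)
    (hskew : ∀ k, (J k).transpose = -(J k))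
    (hMet : ∀ t : Fin m → ℝ, t ≠ 0 → IsUnit (∑ k, t k • J k))
    (hHtype : ∀ (x : Fin (2*n) → ℝ) (t : Fin m → ℝ),
      e2norm ((∑ k, t k • J k).mulVec x) = e2norm t * e2norm x) :
    ∀ α : ℝ, 0 < α → ∀ p : GrpPt n m, p ≠ 0 →
      VA J α p
        = (1/4) * α^2 * kN p ^ (2*α - 4) * e2norm p.1 ^ 2
          - (1/2) * α * ((2*(n:ℝ) + 2*(m:ℝ)) + α - 2) * kN p ^ (α - 4) * e2norm p.1 ^ 2 :=
  potential_Htype_general n m J hskew hHtype
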